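/- arXiv:1205.3694 — 2 statements merged into one kernel-verified Lean document; each statement's English description precedes it below -/
import Mathlib

section
/- Let μ : R → K be a K-valued measure on a covering ring R on a set X. For every A ∈ R the following are equivalent: (1) A is negligible, i.e. N_μ(x) = 0 for every x ∈ A; (2) ‖A‖_μ = 0; (3) μ(A∩B) = μ(A) for every B ∈ R. -/
open scoped Classical

/-- A covering ring of subsets of `X`: it covers `X` and is closed under
intersections, unions and differences. -/
def IsCoveringRing {X : Type*} (R : Set (Set X)) : Prop :=
  (∀ x : X, ∃ A ∈ R, x ∈ A) ∧
    ∀ A ∈ R, ∀ B ∈ R, A ∩ B ∈ R ∧ A ∪ B ∈ R ∧ A \ B ∈ R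

/-- `R` is separating: distinct points can be separated by a member of `R`. -/
def Separating {X : Type*} (R : Set (Set X)) : Prop :=
  ∀ x y : X, x ≠ y → ∃ A ∈ R, x ∈ A ∧ y ∉ A

/-- A shrinking collection: the intersection of any two members contains a member. -/
def Shrinking {X : Type*} (𝒜 : Set (Set X)) : Prop :=
  ∀ A ∈ 𝒜, ∀ B ∈ 𝒜, ∃ C ∈ 𝒜, C ⊆ A ∩ B

/-- A `K`-valued measure on a covering ring `R`: additive, bounded and continuous. -/
structure IsKMeasure {X : Type*} {K : Type*} [NormedField K]
    (R : Set (Set X)) (μ : Set X → K) : Prop where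
  additive : ∀ A ∈ R, ∀ B ∈ R, Disjoint A B → μ (A ∪ B) = μ A + μ B
  bounded : ∀ A ∈ R, ∃ M : ℝ, ∀ B ∈ R, B ⊆ A → ‖μ B‖ ≤ M
  cont : ∀ 𝒜 ⊆ R, Shrinking 𝒜 → ⋂₀ 𝒜 = ∅ →
    ∀ ε : ℝ, 0 < ε → ∃ A₀ ∈ 𝒜, ∀ A ∈ 𝒜, A ⊆ A₀ → ‖μ A‖ < ε

/-- `‖A‖_μ = sup {|μ B| : B ∈ R, B ⊆ A}`. -/
noncomputable def setNorm {X K : Type*} [NormedField K]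
    (R : Set (Set X)) (μ : Set X → K) (A : Set X) : ℝ :=
  sSup {r : ℝ | ∃ B ∈ R, B ⊆ A ∧ r = ‖μ B‖}

/-- `N_μ(x) = inf {‖A‖_μ : A ∈ R, x ∈ A}`. -/
noncomputable def normFun {X K : Type*} [NormedField K]
    (R : Set (Set X)) (μ : Set X → K) (x : X) : ℝ :=
  sInf {r : ℝ | ∃ A ∈ R, x ∈ A ∧ r = setNorm R μ A}

/-- `‖f‖_μ = sup_{x ∈ X} |f x| ⬝ N_μ(x)`. -/
noncomputable def fNorm {X K : Type*} [NormedField K]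
    (R : Set (Set X)) (μ : Set X → K) (f : X → K) : ℝ :=
  sSup {r : ℝ | ∃ x : X, r = ‖f x‖ * normFun R μ x}

/-- A probability space: `R` is a covering algebra and `μ(X) = 1`. -/
def IsProbSpace {X K : Type*} [NormedField K] (R : Set (Set X)) (μ : Set X → K) : Prop :=
  IsCoveringRing R ∧ Set.univ ∈ R ∧ IsKMeasure R μ ∧ μ Set.univ = 1

/-- A measure algebra isomorphism `(R,μ) → (R',ν)`. -/
def IsMeasAlgIso {X Y K : Type*} [NormedField K] (R : Set (Set X)) (μ : Set X → K)
    (R' : Set (Set Y)) (ν : Set Y → K) (Φ : Set X → Set Y) : Prop :=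
  Set.BijOn Φ R R' ∧
    (∀ A ∈ R, ∀ B ∈ R, Φ (A ∪ B) = Φ A ∪ Φ B) ∧
    (∀ A ∈ R, Φ (Set.univ \ A) = Set.univ \ Φ A) ∧
    (∀ A ∈ R, ν (Φ A) = μ A)

/-- An invertible measure preserving transformation of `(X,R,μ)`. -/
def IsInvMPT {X K : Type*} [NormedField K] (R : Set (Set X)) (μ : Set X → K)
    (T : X → X) : Prop :=
  Function.Bijective T ∧
    (∀ A ∈ R, T '' A ∈ R) ∧ (∀ A ∈ R, T ⁻¹' A ∈ R) ∧
    (∀ A ∈ R, μ (T '' A) = μ A) ∧ (∀ A ∈ R, μ (T ⁻¹' A) = μ A)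

/-- A finite partition of `X` by pairwise disjoint nonempty members of `R`. -/
def IsFinPartition {X : Type*} (R : Set (Set X)) (α : Finset (Set X)) : Prop :=
  (∀ A ∈ α, A ∈ R) ∧ (∀ A ∈ α, A ≠ ∅) ∧
    (∀ A ∈ α, ∀ B ∈ α, A ≠ B → Disjoint A B) ∧
    ⋃₀ (α : Set (Set X)) = Set.univ

/-- The join `α ∨ β` of two partitions, discarding empty intersections. -/
noncomputable def pJoin {X : Type*} (α β : Finset (Set X)) : Finset (Set X) :=
  (Finset.image₂ (fun A B => A ∩ B) α β).filter (fun C => C ≠ ∅)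

/-- `M(α)`: the number of members of `α` of positive norm. -/
noncomputable def Mcard {X K : Type*} [NormedField K] (R : Set (Set X)) (μ : Set X → K)
    (α : Finset (Set X)) : ℕ :=
  (α.filter (fun A => 0 < setNorm R μ A)).card

/-- `H_μ(α) = (min {‖A‖_μ : A ∈ α, ‖A‖_μ > 0}) * log₂ M(α)` (and `0` if `M(α) = 0`,
since `sInf ∅ = 0` and `log₂ 0 = 0` in Mathlib). -/
noncomputable def Hent {X K : Type*} [NormedField K] (R : Set (Set X)) (μ : Set X → K)
    (α : Finset (Set X)) : ℝ :=
  sInf {r : ℝ | ∃ A ∈ α, 0 < setNorm R μ A ∧ r = setNorm R μ A} *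
    Real.logb 2 (Mcard R μ α)

/-- `joinSeq T α n = α ∨ T⁻¹α ∨ ⋯ ∨ T^{-n}α`. -/
noncomputable def joinSeq {X : Type*} (T : X → X) (α : Finset (Set X)) : ℕ → Finset (Set X)
  | 0 => α
  | n + 1 => pJoin (joinSeq T α n) (α.image (fun A => T^[n + 1] ⁻¹' A))

/-- `h_μ(T,α) = lim_{n→∞} H_μ(α ∨ T⁻¹α ∨ ⋯ ∨ T^{-(n-1)}α)/n`. -/
noncomputable def hMeasPart {X K : Type*} [NormedField K] (R : Set (Set X)) (μ : Set X → K)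
    (T : X → X) (α : Finset (Set X)) : ℝ :=
  Filter.limUnder Filter.atTop (fun n : ℕ => Hent R μ (joinSeq T α n) / (n + 1))

/-- `h_μ(T) = sup_α h_μ(T,α)` over finite partitions `α` of `X` relative to `R`. -/
noncomputable def hMeas {X K : Type*} [NormedField K] (R : Set (Set X)) (μ : Set X → K)
    (T : X → X) : ℝ :=
  sSup {r : ℝ | ∃ α : Finset (Set X), IsFinPartition R α ∧ r = hMeasPart R μ T α}

/-- The partition `α(𝒰)` associated to a finite cover `𝒰`: nonempty sets of the form
`A₁ ∩ ⋯ ∩ A_k` where each `Aᵢ` is `Uᵢ` or `X ∖ Uᵢ`. -/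
noncomputable def coverPart {X : Type*} (𝒰 : Finset (Set X)) : Finset (Set X) :=
  ((𝒰.powerset).image fun S => (⋂ U ∈ S, U) ∩ ⋂ U ∈ 𝒰 \ S, (Set.univ \ U)).filter
    (fun C => C ≠ ∅)

/-- The join `𝒰 ∨ 𝒲` of two covers. -/
noncomputable def cJoin {X : Type*} (𝒰 𝒲 : Finset (Set X)) : Finset (Set X) :=
  Finset.image₂ (fun U W => U ∩ W) 𝒰 𝒲

/-- `N(𝒰)`: the least cardinality of a subcover of `𝒰`. -/
noncomputable def coverN {X : Type*} (𝒰 : Finset (Set X)) : ℕ :=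
  sInf {n : ℕ | ∃ 𝒱 : Finset (Set X), 𝒱 ⊆ 𝒰 ∧ ⋃₀ (𝒱 : Set (Set X)) = Set.univ ∧ 𝒱.card = n}

/-- `H_top(𝒰) = log₂ N(𝒰)`. -/
noncomputable def Htop {X : Type*} (𝒰 : Finset (Set X)) : ℝ :=
  Real.logb 2 (coverN 𝒰)

/-- `cJoinSeq T 𝒰 n = 𝒰 ∨ T⁻¹𝒰 ∨ ⋯ ∨ T^{-n}𝒰`. -/
noncomputable def cJoinSeq {X : Type*} (T : X → X) (𝒰 : Finset (Set X)) : ℕ → Finset (Set X)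
  | 0 => 𝒰
  | n + 1 => cJoin (cJoinSeq T 𝒰 n) (𝒰.image (fun U => T^[n + 1] ⁻¹' U))

/-- `h_top(T,𝒰) = lim_{n→∞} H_top(𝒰 ∨ T⁻¹𝒰 ∨ ⋯ ∨ T^{-(n-1)}𝒰)/n`. -/
noncomputable def hTopCov {X : Type*} (T : X → X) (𝒰 : Finset (Set X)) : ℝ :=
  Filter.limUnder Filter.atTop (fun n : ℕ => Htop (cJoinSeq T 𝒰 n) / (n + 1))

/-- `h_top(T) = sup_𝒰 h_top(T,𝒰)` over finite open covers `𝒰` of `X` for the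
topology `t`. -/
noncomputable def hTop {X : Type*} (t : TopologicalSpace X) (T : X → X) : ℝ :=
  sSup {r : ℝ | ∃ 𝒰 : Finset (Set X), (∀ U ∈ 𝒰, t.IsOpen U) ∧
    ⋃₀ (𝒰 : Set (Set X)) = Set.univ ∧ r = hTopCov T 𝒰}


/-!
`‖·‖_μ` is ultrametric on unions, so the sets `U ∈ R` with `‖U‖_μ < c` are closed under finite
unions. If `A` is negligible and `B ⊆ A` had `|μ(B)| = c > 0`, these sets would cover `B`, so the
sets `B ∖ U` form a shrinking family with empty intersection; continuity of `μ` gives one with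
`|μ(B ∖ U)| < c`, and then `|μ(B)| ≤ max(|μ(B ∩ U)|, |μ(B ∖ U)|) < c`.
-/

section

variable {X K : Type*} [NormedField K] {R : Set (Set X)} {μ : Set X → K} {A B U V : Set X}

theorem IsCoveringRing.empty_mem (hR : IsCoveringRing R) (hA : A ∈ R) : ∅ ∈ R := by
  simpa using (hR.2 A hA A hA).2.2

theorem setNorm_le {r : ℝ} (hA : A ∈ R) (h : ∀ B ∈ R, B ⊆ A → ‖μ B‖ ≤ r) :
    setNorm R μ A ≤ r :=
  csSup_le ⟨_, A, hA, subset_rfl, rfl⟩ (by rintro _ ⟨B, hB, hBA, rfl⟩; exact h B hB hBA)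

theorem exists_setNorm_lt_of_normFun_lt {c : ℝ} {x : X} (hA : A ∈ R) (hx : x ∈ A)
    (hc : normFun R μ x < c) : ∃ U ∈ R, x ∈ U ∧ setNorm R μ U < c := by
  obtain ⟨_, ⟨U, hU, hxU, rfl⟩, hUc⟩ := exists_lt_of_csInf_lt
    (s := {r | ∃ A ∈ R, x ∈ A ∧ r = setNorm R μ A}) ⟨_, A, hA, hx, rfl⟩ hc
  exact ⟨U, hU, hxU, hUc⟩

namespace IsKMeasure

theorem map_empty (hμ : IsKMeasure R μ) (h : ∅ ∈ R) : μ ∅ = 0 := by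
  simpa using hμ.additive ∅ h ∅ h (Set.disjoint_empty _)

theorem map_eq_map_inter_add_map_diff (hR : IsCoveringRing R) (hμ : IsKMeasure R μ)
    (hA : A ∈ R) (hU : U ∈ R) : μ A = μ (A ∩ U) + μ (A \ U) := by
  rw [← hμ.additive _ (hR.2 A hA U hU).1 _ (hR.2 A hA U hU).2.2 Set.disjoint_sdiff_inter.symm,
    Set.inter_union_sdiff]

theorem norm_le_max_inter_diff (hna : IsNonarchimedean (norm : K → ℝ))
    (hR : IsCoveringRing R) (hμ : IsKMeasure R μ) (hA : A ∈ R) (hU : U ∈ R) :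
    ‖μ A‖ ≤ max ‖μ (A ∩ U)‖ ‖μ (A \ U)‖ :=
  hμ.map_eq_map_inter_add_map_diff hR hA hU ▸ hna _ _

theorem norm_le_setNorm (hμ : IsKMeasure R μ) (hA : A ∈ R) (hB : B ∈ R) (hBA : B ⊆ A) :
    ‖μ B‖ ≤ setNorm R μ A := by
  obtain ⟨M, hM⟩ := hμ.bounded A hA
  exact le_csSup ⟨M, by rintro r ⟨C, hC, hCA, rfl⟩; exact hM C hC hCA⟩ ⟨B, hB, hBA, rfl⟩

theorem setNorm_nonneg (hμ : IsKMeasure R μ) (hA : A ∈ R) : 0 ≤ setNorm R μ A :=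
  (norm_nonneg _).trans (hμ.norm_le_setNorm hA hA subset_rfl)

theorem setNorm_eq_zero_iff (hμ : IsKMeasure R μ) (hA : A ∈ R) :
    setNorm R μ A = 0 ↔ ∀ B ∈ R, B ⊆ A → μ B = 0 :=
  ⟨fun h B hB hBA => norm_le_zero_iff.mp (h ▸ hμ.norm_le_setNorm hA hB hBA),
    fun h => (setNorm_le hA fun B hB hBA => by simp [h B hB hBA]).antisymm
      (hμ.setNorm_nonneg hA)⟩

theorem setNorm_eq_zero_iff_forall_map_inter_eq (hR : IsCoveringRing R) (hμ : IsKMeasure R μ)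
    (hA : A ∈ R) : setNorm R μ A = 0 ↔ ∀ B ∈ R, μ (A ∩ B) = μ A := by
  rw [hμ.setNorm_eq_zero_iff hA]
  refine ⟨fun h B hB => by rw [h _ (hR.2 A hA B hB).1 Set.inter_subset_left, h A hA subset_rfl],
    fun h B hB hBA => ?_⟩
  have h_empty := hR.empty_mem hA
  rw [← Set.inter_eq_right.mpr hBA, h B hB, ← h ∅ h_empty, Set.inter_empty, hμ.map_empty h_empty]

theorem setNorm_union_le (hna : IsNonarchimedean (norm : K → ℝ)) (hR : IsCoveringRing R)
    (hμ : IsKMeasure R μ) (hU : U ∈ R) (hV : V ∈ R) :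
    setNorm R μ (U ∪ V) ≤ max (setNorm R μ U) (setNorm R μ V) := by
  refine setNorm_le (hR.2 U hU V hV).2.1 fun D hD hDUV => ?_
  have hDU := hR.2 D hD U hU
  refine (hμ.norm_le_max_inter_diff hna hR hD hU).trans (max_le_max ?_ ?_)
  · exact hμ.norm_le_setNorm hU hDU.1 Set.inter_subset_right
  · exact hμ.norm_le_setNorm hV hDU.2.2 fun x hx => (hDUV hx.1).resolve_left hx.2

theorem normFun_nonneg (hμ : IsKMeasure R μ) (x : X) : 0 ≤ normFun R μ x :=
  Real.sInf_nonneg <| by rintro _ ⟨C, hC, -, rfl⟩; exact hμ.setNorm_nonneg hC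

theorem normFun_le_setNorm (hμ : IsKMeasure R μ) (hA : A ∈ R) {x : X} (hx : x ∈ A) :
    normFun R μ x ≤ setNorm R μ A :=
  csInf_le ⟨0, by rintro _ ⟨C, hC, -, rfl⟩; exact hμ.setNorm_nonneg hC⟩ ⟨A, hA, hx, rfl⟩

theorem exists_norm_diff_lt (hna : IsNonarchimedean (norm : K → ℝ)) (hR : IsCoveringRing R)
    (hμ : IsKMeasure R μ) (hB : B ∈ R) {c : ℝ} (hc : 0 < c)
    (hcover : ∀ x ∈ B, ∃ U ∈ R, x ∈ U ∧ setNorm R μ U < c) :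
    ∃ U ∈ R, setNorm R μ U < c ∧ ‖μ (B \ U)‖ < c := by
  have h_empty := hR.empty_mem hB
  set 𝒜 := {C | ∃ U ∈ R, setNorm R μ U < c ∧ C = B \ U}
  have h𝒜R : 𝒜 ⊆ R := by
    rintro _ ⟨U, hU, -, rfl⟩
    exact (hR.2 B hB U hU).2.2
  have hshrink : Shrinking 𝒜 := by
    rintro _ ⟨U, hU, hUc, rfl⟩ _ ⟨V, hV, hVc, rfl⟩
    refine ⟨B \ (U ∪ V), ⟨U ∪ V, (hR.2 U hU V hV).2.1, ?_, rfl⟩, Set.sdiff_inter_sdiff.superset⟩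
    exact (hμ.setNorm_union_le hna hR hU hV).trans_lt (max_lt hUc hVc)
  have hempty : ⋂₀ 𝒜 = ∅ := by
    refine Set.eq_empty_of_forall_notMem fun x hx => ?_
    have hxB : x ∈ B := by
      have hsmall : setNorm R μ ∅ < c := (setNorm_le h_empty fun D _ hD => by
        simp [Set.subset_empty_iff.mp hD, hμ.map_empty h_empty]).trans_lt hc
      simpa using hx (B \ ∅) ⟨∅, h_empty, hsmall, rfl⟩
    obtain ⟨U, hU, hxU, hUc⟩ := hcover x hxB
    exact (hx (B \ U) ⟨U, hU, hUc, rfl⟩).2 hxU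
  obtain ⟨_, ⟨U, hU, hUc, rfl⟩, hsmall⟩ := hμ.cont 𝒜 h𝒜R hshrink hempty c hc
  exact ⟨U, hU, hUc, hsmall _ ⟨U, hU, hUc, rfl⟩ subset_rfl⟩

theorem setNorm_eq_zero_of_normFun_eq_zero (hna : IsNonarchimedean (norm : K → ℝ))
    (hR : IsCoveringRing R) (hμ : IsKMeasure R μ) (hA : A ∈ R)
    (hneg : ∀ x ∈ A, normFun R μ x = 0) : setNorm R μ A = 0 := by
  refine (hμ.setNorm_eq_zero_iff hA).mpr fun B hB hBA => norm_eq_zero.mp ?_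
  by_contra hne
  have hc : 0 < ‖μ B‖ := (norm_nonneg _).lt_of_ne' hne
  obtain ⟨U, hU, hUc, hdiff⟩ := hμ.exists_norm_diff_lt hna hR hB hc fun x hx =>
    exists_setNorm_lt_of_normFun_lt hB hx (hneg x (hBA hx) ▸ hc)
  have hinter : ‖μ (B ∩ U)‖ < ‖μ B‖ :=
    (hμ.norm_le_setNorm hU (hR.2 B hB U hU).1 Set.inter_subset_right).trans_lt hUc
  exact (hμ.norm_le_max_inter_diff hna hR hB hU).not_gt (max_lt hinter hdiff)

end IsKMeasure

end

theorem stmt3_general {X K : Type*} [NontriviallyNormedField K]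
    (hna : IsNonarchimedean (norm : K → ℝ))
    (R : Set (Set X)) (hR : IsCoveringRing R) (μ : Set X → K) (hμ : IsKMeasure R μ) :
    ∀ A ∈ R,
      List.TFAE [∀ x ∈ A, normFun R μ x = 0,
        setNorm R μ A = 0,
        ∀ B ∈ R, μ (A ∩ B) = μ A] := by
  intro A hA
  tfae_have 1 → 2 := hμ.setNorm_eq_zero_of_normFun_eq_zero hna hR hA
  tfae_have 2 → 1 := fun h x hx =>
    ((hμ.normFun_le_setNorm hA hx).trans h.le).antisymm (hμ.normFun_nonneg x)
  tfae_have 2 ↔ 3 := hμ.setNorm_eq_zero_iff_forall_map_inter_eq hR hA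
  tfae_finish

/-- For `A ∈ R`, the following are equivalent: `A` is negligible
(`N_μ = 0` on `A`), `‖A‖_μ = 0`, and `μ(A ∩ B) = μ(A)` for all `B ∈ R`. -/
theorem stmt3 {X K : Type*} [NontriviallyNormedField K] [CompleteSpace K]
    (hna : IsNonarchimedean (norm : K → ℝ))
    (R : Set (Set X)) (hR : IsCoveringRing R) (μ : Set X → K) (hμ : IsKMeasure R μ) :
    ∀ A ∈ R,
      List.TFAE [∀ x ∈ A, normFun R μ x = 0,
        setNorm R μ A = 0,
        ∀ B ∈ R, μ (A ∩ B) = μ A] :=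
  stmt3_general hna R hR μ hμ
end

section
/- Let (X,R,μ) and (Y,R',ν) be probability spaces over K whose covering rings R and R' are separating, with X₀(μ) = ∅ and Y₀(ν) = ∅, and assume that for every x ∈ X the set X∖{x} is a union of countably many members of R, and for every y ∈ Y the set Y∖{y} is a union of countably many members of R'. Let T and S be invertible measure preserving transformations of (X,R,μ) and (Y,R',ν) respectively. Then T and S are conjugate if and only if they are isomorphic; that is: there exists a measure algebra isomorphism Φ : (R,μ) → (R',ν) with Φ(T⁻¹(A)) = S⁻¹(Φ(A)) for every A ∈ R, if and only if there exists a bijection φ : X → Y with {φ(A) : A ∈ R} = R', ν(φ(A)) = μ(A) for every A ∈ R, and φ∘T = S∘φ. -/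
open scoped Classical

/-!
A measure algebra isomorphism `Φ` is realized by a point map. For `x ∈ X` the sets `Φ A` with
`x ∈ A ∈ R` form a shrinking collection; if it had empty intersection, continuity of `ν` would make
`|μ A| = |ν (Φ A)|` uniformly small on the sets `A ∋ x` below some `A₀`, and splitting any
`B ⊆ A₀` as `A₀ ∖ (A₀ ∖ B)` would force `N_μ(x) ≤ ‖A₀‖_μ` to be small, contradicting
`N_μ(x) ≠ 0`. A point `φ x` of that intersection lies in `Φ A` exactly when `x ∈ A`, it is unique
since `R'` separates points, and applying the same construction to `Φ⁻¹` shows that `φ` is a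
bijection with `φ '' A = Φ A`. Conversely a conjugating bijection `φ` induces `A ↦ φ '' A`.
-/

open Set Function

namespace IsCoveringRing

variable {X : Type*} {R : Set (Set X)} {A B : Set X}

theorem inter_mem (hR : IsCoveringRing R) (hA : A ∈ R) (hB : B ∈ R) : A ∩ B ∈ R :=
  (hR.2 A hA B hB).1

theorem union_mem (hR : IsCoveringRing R) (hA : A ∈ R) (hB : B ∈ R) : A ∪ B ∈ R :=
  (hR.2 A hA B hB).2.1

theorem diff_mem (hR : IsCoveringRing R) (hA : A ∈ R) (hB : B ∈ R) : A \ B ∈ R :=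
  (hR.2 A hA B hB).2.2

theorem empty_mem_s8 (hR : IsCoveringRing R) (hA : A ∈ R) : (∅ : Set X) ∈ R := by
  simpa using hR.diff_mem hA hA

variable {K : Type*} [NormedField K] {μ : Set X → K}

theorem setNorm_nonneg (hR : IsCoveringRing R) (hμ : IsKMeasure R μ) (hA : A ∈ R) :
    0 ≤ setNorm R μ A := by
  obtain ⟨M, hM⟩ := hμ.bounded A hA
  refine (norm_nonneg (μ ∅)).trans (le_csSup ⟨M, ?_⟩ ⟨∅, hR.empty_mem_s8 hA, empty_subset A, rfl⟩)
  rintro _ ⟨B, hB, hBA, rfl⟩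
  exact hM B hB hBA

theorem normFun_le_setNorm (hR : IsCoveringRing R) (hμ : IsKMeasure R μ) {x : X} (hA : A ∈ R)
    (hx : x ∈ A) : normFun R μ x ≤ setNorm R μ A := by
  refine csInf_le ⟨0, ?_⟩ ⟨A, hA, hx, rfl⟩
  rintro _ ⟨B, hB, -, rfl⟩
  exact hR.setNorm_nonneg hμ hB

theorem normFun_nonneg (hR : IsCoveringRing R) (hμ : IsKMeasure R μ) (x : X) :
    0 ≤ normFun R μ x := by
  obtain ⟨A, hA, hxA⟩ := hR.1 x
  refine le_csInf ⟨_, A, hA, hxA, rfl⟩ ?_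
  rintro _ ⟨B, hB, -, rfl⟩
  exact hR.setNorm_nonneg hμ hB

theorem setNorm_le_two_mul (hR : IsCoveringRing R) (hμ : IsKMeasure R μ) {x : X} {ε : ℝ}
    (hA : A ∈ R) (hx : x ∈ A) (hsmall : ∀ C ∈ R, x ∈ C → C ⊆ A → ‖μ C‖ < ε) :
    setNorm R μ A ≤ 2 * ε := by
  have hμA := hsmall A hA hx subset_rfl
  have hε : 0 < ε := (norm_nonneg _).trans_lt hμA
  refine Real.sSup_le ?_ (by positivity)
  rintro _ ⟨B, hB, hBA, rfl⟩
  by_cases hxB : x ∈ B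
  · linarith [hsmall B hB hxB hBA]
  have hD := hR.diff_mem hA hB
  have hsplit : μ A = μ B + μ (A \ B) := by
    rw [← hμ.additive B hB _ hD disjoint_sdiff_right, union_sdiff_cancel hBA]
  calc ‖μ B‖ = ‖μ A - μ (A \ B)‖ := by rw [hsplit, add_sub_cancel_right]
    _ ≤ ‖μ A‖ + ‖μ (A \ B)‖ := norm_sub_le _ _
    _ ≤ 2 * ε := by linarith [hsmall _ hD ⟨hx, hxB⟩ sdiff_subset]

end IsCoveringRing

namespace IsProbSpace

variable {X K : Type*} [NormedField K] {R : Set (Set X)} {μ : Set X → K} {A : Set X}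

theorem compl_mem (hp : IsProbSpace R μ) (hA : A ∈ R) : univ \ A ∈ R :=
  hp.1.diff_mem hp.2.1 hA

end IsProbSpace

theorem Separating.eq_of_forall_mem_imp {X : Type*} {R : Set (Set X)} (hR : Separating R)
    {x y : X} (h : ∀ A ∈ R, x ∈ A → y ∈ A) : x = y := by
  by_contra hxy
  obtain ⟨A, hA, hxA, hyA⟩ := hR x y hxy
  exact hyA (h A hA hxA)

namespace IsMeasAlgIso

variable {X Y K : Type*} [NormedField K] {R : Set (Set X)} {μ : Set X → K}
  {R' : Set (Set Y)} {ν : Set Y → K} {Φ : Set X → Set Y} {A B : Set X}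

theorem map_inter (hp : IsProbSpace R μ) (hΦ : IsMeasAlgIso R μ R' ν Φ) (hA : A ∈ R)
    (hB : B ∈ R) : Φ (A ∩ B) = Φ A ∩ Φ B := by
  have hAc := hp.compl_mem hA
  have hBc := hp.compl_mem hB
  have hAB : A ∩ B = univ \ ((univ \ A) ∪ (univ \ B)) := by ext; simp
  rw [hAB, hΦ.2.2.1 _ (hp.1.union_mem hAc hBc), hΦ.2.1 _ hAc _ hBc, hΦ.2.2.1 _ hA,
    hΦ.2.2.1 _ hB]
  ext; simp

theorem monotone (hΦ : IsMeasAlgIso R μ R' ν Φ) (hA : A ∈ R) (hB : B ∈ R) (hAB : A ⊆ B) :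
    Φ A ⊆ Φ B := by
  have := hΦ.2.1 A hA B hB
  rw [union_eq_self_of_subset_left hAB] at this
  exact this ▸ subset_union_left

theorem invFunOn_map (hΦ : IsMeasAlgIso R μ R' ν Φ) (hA : A ∈ R) : invFunOn Φ R (Φ A) = A :=
  hΦ.1.invOn_invFunOn.1 hA

theorem invFunOn (hp : IsProbSpace R μ) (hΦ : IsMeasAlgIso R μ R' ν Φ) :
    IsMeasAlgIso R' ν R μ (invFunOn Φ R) := by
  refine ⟨hΦ.1.symm hΦ.1.invOn_invFunOn.symm, ?_, ?_, ?_⟩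
  · rintro _ hB₁ _ hB₂
    obtain ⟨A₁, hA₁, rfl⟩ := hΦ.1.2.2 hB₁
    obtain ⟨A₂, hA₂, rfl⟩ := hΦ.1.2.2 hB₂
    rw [← hΦ.2.1 A₁ hA₁ A₂ hA₂, hΦ.invFunOn_map hA₁, hΦ.invFunOn_map hA₂,
      hΦ.invFunOn_map (hp.1.union_mem hA₁ hA₂)]
  · rintro _ hB
    obtain ⟨A, hA, rfl⟩ := hΦ.1.2.2 hB
    rw [← hΦ.2.2.1 A hA, hΦ.invFunOn_map hA, hΦ.invFunOn_map (hp.compl_mem hA)]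
  · rintro _ hB
    obtain ⟨A, hA, rfl⟩ := hΦ.1.2.2 hB
    rw [hΦ.invFunOn_map hA, hΦ.2.2.2 A hA]

theorem exists_forall_mem_of_normFun_ne_zero (hp : IsProbSpace R μ) (hp' : IsProbSpace R' ν)
    (hΦ : IsMeasAlgIso R μ R' ν Φ) {x : X} (hx : normFun R μ x ≠ 0) :
    ∃ y, ∀ A ∈ R, x ∈ A → y ∈ Φ A := by
  set 𝒜 := Φ '' {A | A ∈ R ∧ x ∈ A}
  have h𝒜R' : 𝒜 ⊆ R' := by
    rintro _ ⟨A, ⟨hA, -⟩, rfl⟩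
    exact hΦ.1.1 hA
  have h𝒜 : Shrinking 𝒜 := by
    rintro _ ⟨A₁, ⟨hA₁, hx₁⟩, rfl⟩ _ ⟨A₂, ⟨hA₂, hx₂⟩, rfl⟩
    exact ⟨_, ⟨A₁ ∩ A₂, ⟨hp.1.inter_mem hA₁ hA₂, hx₁, hx₂⟩, rfl⟩,
      (hΦ.map_inter hp hA₁ hA₂).subset⟩
  by_contra! hempty
  have h𝒜empty : ⋂₀ 𝒜 = ∅ := by
    refine eq_empty_of_forall_notMem fun y hy => ?_
    obtain ⟨A, hA, hxA, hyA⟩ := hempty y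
    exact hyA (hy _ ⟨A, ⟨hA, hxA⟩, rfl⟩)
  have hN : 0 < normFun R μ x := (hp.1.normFun_nonneg hp.2.2.1 x).lt_of_ne' hx
  obtain ⟨_, ⟨A₀, ⟨hA₀, hxA₀⟩, rfl⟩, hsmall⟩ :=
    hp'.2.2.1.cont 𝒜 h𝒜R' h𝒜 h𝒜empty (normFun R μ x / 4) (by positivity)
  have hA₀small := hp.1.setNorm_le_two_mul hp.2.2.1 hA₀ hxA₀ fun A hA hxA hAA₀ => by
    simpa [hΦ.2.2.2 A hA] using hsmall _ ⟨A, ⟨hA, hxA⟩, rfl⟩ (hΦ.monotone hA hA₀ hAA₀)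
  linarith [hp.1.normFun_le_setNorm hp.2.2.1 hA₀ hxA₀]

theorem exists_forall_mem_iff (hp : IsProbSpace R μ) (hp' : IsProbSpace R' ν)
    (hΦ : IsMeasAlgIso R μ R' ν Φ) {x : X} (hx : normFun R μ x ≠ 0) :
    ∃ y, ∀ A ∈ R, x ∈ A ↔ y ∈ Φ A := by
  obtain ⟨y, hy⟩ := hΦ.exists_forall_mem_of_normFun_ne_zero hp hp' hx
  refine ⟨y, fun A hA => ⟨hy A hA, fun hyA => by_contra fun hxA => ?_⟩⟩
  have := hy _ (hp.compl_mem hA) ⟨trivial, hxA⟩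
  rw [hΦ.2.2.1 A hA] at this
  exact this.2 hyA

theorem exists_bijective_image_eq (hp : IsProbSpace R μ) (hp' : IsProbSpace R' ν)
    (hΦ : IsMeasAlgIso R μ R' ν Φ) (hsep : Separating R) (hsep' : Separating R')
    (hX₀ : ∀ x, normFun R μ x ≠ 0) (hY₀ : ∀ y, normFun R' ν y ≠ 0) :
    ∃ φ : X → Y, Bijective φ ∧ ∀ A ∈ R, φ '' A = Φ A := by
  choose φ hφ using fun x => hΦ.exists_forall_mem_iff hp hp' (hX₀ x)
  have hinj : Injective φ := fun x₁ x₂ h =>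
    hsep.eq_of_forall_mem_imp fun A hA hx₁ => (hφ x₂ A hA).2 (h ▸ (hφ x₁ A hA).1 hx₁)
  have hsurj : Surjective φ := fun y => by
    obtain ⟨x, hx⟩ := (hΦ.invFunOn hp).exists_forall_mem_iff hp' hp (hY₀ y)
    refine ⟨x, hsep'.eq_of_forall_mem_imp fun B hB hxB => ?_⟩
    obtain ⟨A, hA, rfl⟩ := hΦ.1.2.2 hB
    have hyA := hx (Φ A) hB
    rw [hΦ.invFunOn_map hA] at hyA
    exact hyA.2 ((hφ x A hA).2 hxB)
  refine ⟨φ, ⟨hinj, hsurj⟩, fun A hA => ?_⟩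
  ext y
  obtain ⟨x, rfl⟩ := hsurj y
  rw [hinj.mem_set_image, hφ x A hA]

end IsMeasAlgIso

section PointMap

variable {X Y K : Type*} [NormedField K] {R : Set (Set X)} {μ : Set X → K}
  {R' : Set (Set Y)} {ν : Set Y → K} {φ : X → Y}

theorem isMeasAlgIso_image (hφ : Bijective φ) (hR : image φ '' R = R')
    (hμ : ∀ A ∈ R, ν (φ '' A) = μ A) : IsMeasAlgIso R μ R' ν (image φ) := by
  refine ⟨⟨fun A hA => hR ▸ mem_image_of_mem _ hA, image_injective.2 hφ.1 |>.injOn,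
    hR ▸ surjOn_image _ R⟩, fun A _ B _ => image_union φ A B, fun A _ => ?_, hμ⟩
  rw [image_sdiff hφ.1, image_univ, hφ.2.range_eq]

theorem image_preimage_of_comp_eq {T : X → X} {S : Y → Y} (hφ : Bijective φ)
    (h : φ ∘ T = S ∘ φ) (A : Set X) : φ '' (T ⁻¹' A) = S ⁻¹' (φ '' A) := by
  ext y
  obtain ⟨x, rfl⟩ := hφ.2 y
  rw [hφ.1.mem_set_image, mem_preimage, mem_preimage, ← comp_apply (f := S), ← h, comp_apply,
    hφ.1.mem_set_image]

end PointMap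

theorem stmt8_general {X Y K : Type*} [NontriviallyNormedField K]
    (R : Set (Set X)) (μ : Set X → K) (hXp : IsProbSpace R μ) (hsepX : Separating R)
    (hX0 : ∀ x : X, normFun R μ x ≠ 0)
    (R' : Set (Set Y)) (ν : Set Y → K) (hYp : IsProbSpace R' ν) (hsepY : Separating R')
    (hY0 : ∀ y : Y, normFun R' ν y ≠ 0)
    (T : X → X) (hT : IsInvMPT R μ T) (S : Y → Y) :
    (∃ Φ : Set X → Set Y, IsMeasAlgIso R μ R' ν Φ ∧
        ∀ A ∈ R, Φ (T ⁻¹' A) = S ⁻¹' (Φ A)) ↔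
      (∃ φ : X → Y, Function.Bijective φ ∧ (Set.image φ) '' R = R' ∧
        (∀ A ∈ R, ν (φ '' A) = μ A) ∧ φ ∘ T = S ∘ φ) := by
  constructor
  · rintro ⟨Φ, hΦ, hΦT⟩
    obtain ⟨φ, hφ, himg⟩ := hΦ.exists_bijective_image_eq hXp hYp hsepX hsepY hX0 hY0
    refine ⟨φ, hφ, (image_congr himg).trans hΦ.1.image_eq,
      fun A hA => by rw [himg A hA, hΦ.2.2.2 A hA], funext fun x => ?_⟩
    refine hsepY.eq_of_forall_mem_imp fun B hB hTx => ?_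
    obtain ⟨A, hA, rfl⟩ := hΦ.1.2.2 hB
    rw [comp_apply, ← himg A hA, hφ.1.mem_set_image] at hTx
    rw [comp_apply, ← mem_preimage, ← hΦT A hA, ← himg _ (hT.2.2.1 A hA), hφ.1.mem_set_image]
    exact hTx
  · rintro ⟨φ, hφ, hR, hμ, hcomm⟩
    exact ⟨image φ, isMeasAlgIso_image hφ hR hμ,
      fun A _ => image_preimage_of_comp_eq hφ hcomm A⟩

/-- When `X₀(μ) = ∅` and `Y₀(ν) = ∅`, two invertible measure preserving
transformations are conjugate if and only if they are isomorphic. -/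
theorem stmt8 {X Y K : Type*} [NontriviallyNormedField K] [CompleteSpace K]
    (hna : IsNonarchimedean (norm : K → ℝ))
    (R : Set (Set X)) (μ : Set X → K) (hXp : IsProbSpace R μ) (hsepX : Separating R)
    (hX0 : ∀ x : X, normFun R μ x ≠ 0)
    (hcX : ∀ x : X, ∃ f : ℕ → Set X, (∀ n, f n ∈ R) ∧ (⋃ n, f n) = Set.univ \ {x})
    (R' : Set (Set Y)) (ν : Set Y → K) (hYp : IsProbSpace R' ν) (hsepY : Separating R')
    (hY0 : ∀ y : Y, normFun R' ν y ≠ 0)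
    (hcY : ∀ y : Y, ∃ g : ℕ → Set Y, (∀ n, g n ∈ R') ∧ (⋃ n, g n) = Set.univ \ {y})
    (T : X → X) (hT : IsInvMPT R μ T) (S : Y → Y) (hS : IsInvMPT R' ν S) :
    (∃ Φ : Set X → Set Y, IsMeasAlgIso R μ R' ν Φ ∧
        ∀ A ∈ R, Φ (T ⁻¹' A) = S ⁻¹' (Φ A)) ↔
      (∃ φ : X → Y, Function.Bijective φ ∧ (Set.image φ) '' R = R' ∧
        (∀ A ∈ R, ν (φ '' A) = μ A) ∧ φ ∘ T = S ∘ φ) :=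
  stmt8_general R μ hXp hsepX hX0 R' ν hYp hsepY hY0 T hT S
end
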